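/- Let n ≥ 2 and let the symmetric group S_n act on ℤ^n (functions Fin n → ℤ) by permuting coordinates, and let L = {v : Fin n → ℤ | ∑_i v i = 0} be the sum-zero lattice. If P is a subgroup of L stable under every coordinate permutation, then either P = 0 or P has finite index in L. -/

import Mathlib

/-!
A nonzero `v ∈ P` has coordinate sum zero, so it is not constant: `c := v i - v j ≠ 0` for some
`i, j`, and `v - (i j) • v = c (e_i - e_j) ∈ P`. Transpositions fixing `j` carry this to
`c (e_k - e_j)` for every `k`, and these generate `c L`. So `c L ≤ P`, and `L / c L` is a
finitely generated torsion group, hence finite.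
-/

/-- The sum-zero lattice `L ⊆ ℤ^n`. -/
def sumZeroZ (n : ℕ) : AddSubgroup (Fin n → ℤ) where
  carrier := {v | ∑ i, v i = 0}
  add_mem' := by
    intro a b ha hb
    simp only [Set.mem_setOf_eq, Pi.add_apply, Finset.sum_add_distrib] at *
    simp [ha, hb]
  zero_mem' := by simp
  neg_mem' := by
    intro v hv
    simp only [Set.mem_setOf_eq, Pi.neg_apply, Finset.sum_neg_distrib] at *
    simp [hv]

open Equiv

namespace AddSubgroup

theorem relIndex_ne_zero_of_zsmul_mem {G : Type*} [AddCommGroup G] {H K : AddSubgroup G}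
    (hK : K.FG) {c : ℤ} (hc : c ≠ 0) (h : ∀ x ∈ K, c • x ∈ H) : H.relIndex K ≠ 0 := by
  have := isFiniteRelIndex_map_nsmulAddMonoidHom_of_fg hK (Int.natAbs_ne_zero.mpr hc)
  suffices K.map (nsmulAddMonoidHom c.natAbs) ≤ H from
    (isFiniteRelIndex_of_le_left K this).relIndex_ne_zero
  rintro _ ⟨x, hx, rfl⟩
  rw [nsmulAddMonoidHom_apply, ← natCast_zsmul, Int.natCast_natAbs]
  rcases abs_choice c with hc | hc <;> rw [hc]
  · exact h x hx
  · exact neg_smul c x ▸ neg_mem (h x hx)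

theorem fg_of_isNoetherian {G : Type*} [AddCommGroup G] [IsNoetherian ℤ G] (H : AddSubgroup G) :
    H.FG :=
  (Submodule.fg_iff_addSubgroup_fg H.toIntSubmodule).mp (IsNoetherian.noetherian _)

end AddSubgroup

theorem exists_apply_ne_of_sum_eq_zero {ι M : Type*} [Fintype ι] [AddCommMonoid M]
    [IsAddTorsionFree M] {v : ι → M} (hv : ∑ i, v i = 0) (hv0 : v ≠ 0) :
    ∃ i j, v i ≠ v j := by
  by_contra! hconst
  obtain ⟨k, hk⟩ := Function.ne_iff.mp hv0
  have : Nonempty ι := ⟨k⟩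
  have : Fintype.card ι • v k = 0 := by
    simpa [fun i => hconst i k] using hv
  exact hk ((nsmul_eq_zero_iff_right Fintype.card_ne_zero).mp this)

section PermStable

variable {ι M : Type*} [DecidableEq ι] [AddCommGroup M]

theorem sub_comp_swap_eq_single_sub_single (v : ι → M) (i j : ι) :
    (v - fun m => v ((swap i j)⁻¹ m)) = Pi.single i (v i - v j) - Pi.single j (v i - v j) := by
  ext m
  rcases eq_or_ne m i with rfl | hmi
  · rcases eq_or_ne m j with rfl | hmj <;> simp [*]
  rcases eq_or_ne m j with rfl | hmj
  · simp [*]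
  · simp [swap_apply_of_ne_of_ne, *]

theorem single_sub_single_comp_perm_inv (σ : Perm ι) (a b : ι) (x : M) :
    (fun m => (Pi.single a x - Pi.single b x : ι → M) (σ⁻¹ m)) =
      Pi.single (σ a) x - Pi.single (σ b) x := by
  ext m
  simp [Pi.single_apply, Equiv.symm_apply_eq]

theorem single_sub_single_mem_of_perm_stable {P : AddSubgroup (ι → M)}
    (hP : ∀ σ : Perm ι, ∀ v ∈ P, (fun i => v (σ⁻¹ i)) ∈ P) {i j : ι} (hij : i ≠ j) {x : M}
    (hx : Pi.single i x - Pi.single j x ∈ P) (k : ι) : Pi.single k x - Pi.single j x ∈ P := by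
  rcases eq_or_ne k j with rfl | hkj
  · simp
  have := hP (swap i k) _ hx
  rwa [single_sub_single_comp_perm_inv, swap_apply_left,
    swap_apply_of_ne_of_ne hij.symm hkj.symm] at this

theorem zsmul_mem_of_single_sub_single_mem [Fintype ι] {P : AddSubgroup (ι → ℤ)} {c : ℤ}
    {j : ι} (h : ∀ k, Pi.single k c - Pi.single j c ∈ P) {u : ι → ℤ} (hu : ∑ k, u k = 0) :
    c • u ∈ P := by
  have : c • u = ∑ k, u k • (Pi.single k c - Pi.single j c) := by
    simp only [smul_sub, Finset.sum_sub_distrib, ← Finset.sum_smul, hu, zero_smul, sub_zero]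
    ext m
    simp [Finset.sum_apply, Pi.single_apply, mul_comm]
  rw [this]
  exact P.sum_mem fun k _ => P.zsmul_mem (h k) _

end PermStable

theorem perm_stable_subgroup_trivial_or_finite_index_general (n : ℕ)
    (P : AddSubgroup (Fin n → ℤ))
    (hP_le : P ≤ sumZeroZ n)
    (hP_stable : ∀ σ : Equiv.Perm (Fin n), ∀ v ∈ P, (fun i => v (σ⁻¹ i)) ∈ P) :
    P = ⊥ ∨ (P.addSubgroupOf (sumZeroZ n)).index ≠ 0 := by
  refine P.bot_or_exists_ne_zero.imp_right fun ⟨v, hvP, hv0⟩ => ?_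
  obtain ⟨i, j, hvij⟩ := exists_apply_ne_of_sum_eq_zero (hP_le hvP) hv0
  have hbase : Pi.single i (v i - v j) - Pi.single j (v i - v j) ∈ P := by
    rw [← sub_comp_swap_eq_single_sub_single]
    exact P.sub_mem hvP (hP_stable _ v hvP)
  have hall := single_sub_single_mem_of_perm_stable hP_stable (ne_of_apply_ne v hvij) hbase
  exact AddSubgroup.relIndex_ne_zero_of_zsmul_mem (AddSubgroup.fg_of_isNoetherian _)
    (sub_ne_zero.mpr hvij) fun u hu => zsmul_mem_of_single_sub_single_mem hall hu

/-- For `n ≥ 2`, any subgroup of the sum-zero lattice `L ⊆ ℤ^n` stable under all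
coordinate permutations is either trivial or of finite index in `L`. -/
theorem perm_stable_subgroup_trivial_or_finite_index (n : ℕ) (hn : 2 ≤ n)
    (P : AddSubgroup (Fin n → ℤ))
    (hP_le : P ≤ sumZeroZ n)
    (hP_stable : ∀ σ : Equiv.Perm (Fin n), ∀ v ∈ P, (fun i => v (σ⁻¹ i)) ∈ P) :
    P = ⊥ ∨ (P.addSubgroupOf (sumZeroZ n)).index ≠ 0 :=
  perm_stable_subgroup_trivial_or_finite_index_general n P hP_le hP_stable
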